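/- For every nonzero b ∈ F and scalars c, a₂, a₄, ..., a_{2J} ∈ F, the map f given by f(x) = c + ((4b²+1)/(4b))x + ((4b²-1)/(4b))y + Σ_{j=1}^{J} a_{2j} S̃_{2j} and f(y) = c + ((4b²+1)/(4b))y + ((4b²-1)/(4b))x + Σ_{j=1}^{J} a_{2j} S̃_{2j}, where S̃_{2j} is the image in A₁ of (X-Y)^{2j} ∈ F[X,Y], extends to an α-endomorphism of A₁(F) which is an automorphism. -/

import Mathlib

noncomputable section

open scoped BigOperators

/-- Defining relation of the first Weyl algebra: `y*x = x*y + 1`. -/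
inductive WeylRel (F : Type) [Field F] :
    FreeAlgebra F (Fin 2) → FreeAlgebra F (Fin 2) → Prop
  | rel : WeylRel F (FreeAlgebra.ι F 1 * FreeAlgebra.ι F 0)
      (FreeAlgebra.ι F 0 * FreeAlgebra.ι F 1 + 1)

/-- The first Weyl algebra `A₁(F)`. -/
abbrev Weyl (F : Type) [Field F] : Type := RingQuot (WeylRel F)

/-- The generator `x` of `A₁(F)`. -/
def Wx (F : Type) [Field F] : Weyl F :=
  RingQuot.mkAlgHom F (WeylRel F) (FreeAlgebra.ι F 0)

/-- The generator `y` of `A₁(F)`. -/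
def Wy (F : Type) [Field F] : Weyl F :=
  RingQuot.mkAlgHom F (WeylRel F) (FreeAlgebra.ι F 1)

/-- The image in `A₁(F)` of the commutative polynomial `(X - Y)^n ∈ F[X,Y]`,
obtained by expanding commutatively and substituting `x, y` in normal order. -/
def XmY (F : Type) [Field F] (n : ℕ) : Weyl F :=
  ∑ k ∈ Finset.range (n + 1),
    ((-1 : F) ^ k * (n.choose k : F)) • (Wx F ^ (n - k) * Wy F ^ k)

section AuxWeyl

variable (F : Type) [Field F]

lemma weyl_rel : Wy F * Wx F = Wx F * Wy F + 1 := by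
  have := RingQuot.mkAlgHom_rel F (WeylRel.rel (F := F))
  simpa [Wx, Wy, map_mul, map_add, map_one] using this

lemma weyl_hom_ext {A : Type} [Semiring A] [Algebra F A] {f g : Weyl F →ₐ[F] A}
    (hx : f (Wx F) = g (Wx F)) (hy : f (Wy F) = g (Wy F)) : f = g := by
  have h : f.comp (RingQuot.mkAlgHom F (WeylRel F)) = g.comp (RingQuot.mkAlgHom F (WeylRel F)) := by
    apply FreeAlgebra.hom_ext
    funext i
    fin_cases i
    · exact hx
    · exact hy
  apply AlgHom.ext
  intro w
  obtain ⟨z, rfl⟩ := RingQuot.mkAlgHom_surjective F (WeylRel F) w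
  exact DFunLike.congr_fun h z

def weylEnd (X Y : Weyl F) (h : Y * X = X * Y + 1) : Weyl F →ₐ[F] Weyl F :=
  RingQuot.liftAlgHom F ⟨FreeAlgebra.lift F ![X, Y], by
    intro u v huv
    cases huv
    simp [map_mul, map_add, map_one, FreeAlgebra.lift_ι_apply, h]⟩

lemma weylEnd_x (X Y : Weyl F) (h : Y * X = X * Y + 1) : weylEnd F X Y h (Wx F) = X := by
  simp [weylEnd, Wx, RingQuot.liftAlgHom_mkAlgHom_apply, FreeAlgebra.lift_ι_apply]

lemma weylEnd_y (X Y : Weyl F) (h : Y * X = X * Y + 1) : weylEnd F X Y h (Wy F) = Y := by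
  simp [weylEnd, Wy, RingQuot.liftAlgHom_mkAlgHom_apply, FreeAlgebra.lift_ι_apply]


lemma pow_y_mul_x (k : ℕ) :
    Wy F ^ (k + 1) * Wx F = Wx F * Wy F ^ (k + 1) + ((k + 1 : ℕ) : F) • Wy F ^ k := by
  induction k with
  | zero => simpa using weyl_rel F
  | succ k ih =>
    have : Wy F ^ (k + 2) * Wx F = Wy F * (Wy F ^ (k+1) * Wx F) := by
      rw [← mul_assoc, ← pow_succ']
    rw [this, ih, mul_add, ← mul_assoc, weyl_rel F, add_mul, one_mul, mul_smul_comm,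
      mul_assoc, ← pow_succ', ← pow_succ']
    push_cast
    match_scalars <;> ring

lemma XmY_zero : XmY F 0 = 1 := by simp [XmY]

lemma XmY_one : XmY F 1 = Wx F - Wy F := by
  simp only [XmY, Finset.sum_range_succ, pow_zero, pow_one, mul_one, one_mul,
    Finset.range_one, Finset.sum_singleton, Nat.choose_zero_right, Nat.choose_self,
    Nat.cast_one, Nat.sub_zero, Nat.sub_self, one_smul]
  match_scalars <;> ring

lemma XmY_succ (n : ℕ) :
    XmY F (n + 1) = Wx F * XmY F n - XmY F n * Wy F := by
  have hxS : Wx F * XmY F n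
      = ∑ k ∈ Finset.range (n + 1),
          ((-1 : F) ^ k * (n.choose k : F)) • (Wx F ^ (n + 1 - k) * Wy F ^ k) := by
    rw [XmY, Finset.mul_sum]
    refine Finset.sum_congr rfl fun k hk => ?_
    rw [Finset.mem_range] at hk
    rw [mul_smul_comm, ← mul_assoc, show n + 1 - k = (n - k) + 1 by omega, pow_succ']
  have hSy : XmY F n * Wy F
      = ∑ k ∈ Finset.range (n + 1),
          ((-1 : F) ^ k * (n.choose k : F)) • (Wx F ^ (n - k) * Wy F ^ (k + 1)) := by
    rw [XmY, Finset.sum_mul]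
    refine Finset.sum_congr rfl fun k _ => ?_
    rw [smul_mul_assoc, mul_assoc, ← pow_succ]
  have hB : Wx F * XmY F n
      = (∑ i ∈ Finset.range (n + 1),
          ((-1 : F) ^ (i+1) * (n.choose (i+1) : F)) • (Wx F ^ (n - i) * Wy F ^ (i+1)))
        + Wx F ^ (n + 1) := by
    rw [hxS, Finset.sum_range_succ' _ n, Finset.sum_range_succ]
    simp [Nat.succ_sub_succ, Nat.choose_succ_self]
  have hA : XmY F n * Wy F
      = - ∑ i ∈ Finset.range (n + 1),
          ((-1 : F) ^ (i+1) * (n.choose i : F)) • (Wx F ^ (n - i) * Wy F ^ (i+1)) := by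
    rw [hSy, ← Finset.sum_neg_distrib]
    refine Finset.sum_congr rfl fun k _ => ?_
    match_scalars
    ring
  rw [XmY, Finset.sum_range_succ' _ (n + 1), hA, hB]
  have : ∀ i ∈ Finset.range (n + 1),
      ((-1 : F) ^ (i+1) * ((n+1).choose (i+1) : F)) • (Wx F ^ (n + 1 - (i+1)) * Wy F ^ (i+1))
      = ((-1 : F) ^ (i+1) * (n.choose i : F)) • (Wx F ^ (n - i) * Wy F ^ (i+1))
        + ((-1 : F) ^ (i+1) * (n.choose (i+1) : F)) • (Wx F ^ (n - i) * Wy F ^ (i+1)) := by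
    intro i _
    rw [Nat.choose_succ_succ, Nat.succ_sub_succ]
    push_cast
    rw [mul_add, add_smul]
  rw [Finset.sum_congr rfl this, Finset.sum_add_distrib]
  simp only [pow_zero, one_mul, Nat.choose_zero_right, Nat.cast_one, Nat.sub_zero, pow_zero,
    mul_one, one_smul]
  abel


lemma pow_y_mul_x' (k : ℕ) :
    Wy F ^ k * Wx F = Wx F * Wy F ^ k + (k : F) • Wy F ^ (k - 1) := by
  cases k with
  | zero => simp
  | succ k => simpa using pow_y_mul_x F k

lemma x_comm (n : ℕ) :
    XmY F (n + 1) * Wx F = Wx F * XmY F (n + 1) - ((n + 1 : ℕ) : F) • XmY F n := by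
  have step : ∀ k ∈ Finset.range (n + 2),
      (((-1 : F) ^ k * ((n+1).choose k : F)) • (Wx F ^ (n + 1 - k) * Wy F ^ k)) * Wx F
      = ((-1 : F) ^ k * ((n+1).choose k : F)) • (Wx F * (Wx F ^ (n + 1 - k) * Wy F ^ k))
        + ((-1 : F) ^ k * ((n+1).choose k : F) * (k : F)) • (Wx F ^ (n + 1 - k) * Wy F ^ (k - 1)) := by
    intro k _
    rw [smul_mul_assoc, mul_assoc, pow_y_mul_x', mul_add, smul_add, mul_smul_comm,
      smul_smul, ← mul_assoc, ← mul_assoc, ← pow_succ, ← pow_succ']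
  have h1 : (∑ k ∈ Finset.range (n + 2),
      ((-1 : F) ^ k * ((n+1).choose k : F)) • (Wx F * (Wx F ^ (n + 1 - k) * Wy F ^ k)))
      = Wx F * XmY F (n + 1) := by
    rw [XmY, Finset.mul_sum]
    exact Finset.sum_congr rfl fun k _ => (mul_smul_comm _ _ _).symm
  have h2 : (∑ k ∈ Finset.range (n + 2),
      ((-1 : F) ^ k * ((n+1).choose k : F) * (k : F)) • (Wx F ^ (n + 1 - k) * Wy F ^ (k - 1)))
      = -(((n + 1 : ℕ) : F) • XmY F n) := by
    rw [XmY, Finset.smul_sum, ← Finset.sum_neg_distrib, Finset.sum_range_succ' _ (n + 1)]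
    simp only [Nat.cast_zero, mul_zero, zero_smul, add_zero]
    refine Finset.sum_congr rfl fun i _ => ?_
    have hcc : ((n : F) + 1) * (n.choose i : F) = (((n+1).choose (i+1) : F)) * ((i : F) + 1) := by
      exact_mod_cast congrArg (Nat.cast (R := F)) (Nat.add_one_mul_choose_eq n i)
    rw [Nat.succ_sub_succ, Nat.add_sub_cancel, smul_smul]
    match_scalars
    push_cast
    linear_combination ((-1 : F) ^ i) * hcc
  rw [XmY, Finset.sum_mul, Finset.sum_congr rfl step, Finset.sum_add_distrib, h1, h2, ← XmY]
  abel

lemma XmY_rec (n : ℕ) :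
    XmY F (n + 2) = XmY F (n + 1) * (Wx F - Wy F) + ((n + 1 : ℕ) : F) • XmY F n := by
  have h : Wx F * XmY F (n + 1) = XmY F (n + 1) * Wx F + ((n + 1 : ℕ) : F) • XmY F n := by
    rw [x_comm]; abel
  rw [XmY_succ F (n + 1), h, mul_sub]
  abel


lemma XmY_comm (n : ℕ) :
    (Wx F - Wy F) * XmY F n = XmY F n * (Wx F - Wy F) := by
  induction n using Nat.twoStepInduction with
  | zero => simp [XmY_zero]
  | one => rw [XmY_one]
  | more n ih1 ih2 =>
    rw [XmY_rec, mul_add, add_mul, mul_smul_comm, smul_mul_assoc, ← mul_assoc, ih2, ih1,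
      mul_assoc]

lemma hom_fix (g : Weyl F →ₐ[F] Weyl F) (hg : g (Wx F) - g (Wy F) = Wx F - Wy F) (n : ℕ) :
    g (XmY F n) = XmY F n := by
  induction n using Nat.twoStepInduction with
  | zero => simp [XmY_zero]
  | one => rw [XmY_one, map_sub, hg]
  | more n ih1 ih2 =>
    rw [XmY_rec, map_add, map_mul, map_smul, map_sub, hg, ih1, ih2]

lemma adjoin_top : Algebra.adjoin F ({Wx F, Wy F} : Set (Weyl F)) = ⊤ := by
  rw [eq_top_iff]
  rintro z -
  obtain ⟨w, rfl⟩ := RingQuot.mkAlgHom_surjective F (WeylRel F) z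
  induction w using FreeAlgebra.induction with
  | grade0 r => rw [AlgHom.commutes]; exact Subalgebra.algebraMap_mem _ r
  | grade1 i =>
    fin_cases i
    · exact Algebra.subset_adjoin (Set.mem_insert _ _)
    · exact Algebra.subset_adjoin (Set.mem_insert_of_mem _ rfl)
  | mul u v hu hv => rw [map_mul]; exact mul_mem hu hv
  | add u v hu hv => rw [map_add]; exact add_mem hu hv

lemma shear_rel (P : Weyl F) (hP : (Wx F - Wy F) * P = P * (Wx F - Wy F)) :
    (Wy F + P) * (Wx F + P) = (Wx F + P) * (Wy F + P) + 1 := by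
  have hP' : Wx F * P - Wy F * P = P * Wx F - P * Wy F := by
    rw [← sub_mul, ← mul_sub, hP]
  rw [add_mul, mul_add, mul_add, add_mul, mul_add, mul_add, weyl_rel]
  have hx : Wx F * P = P * Wx F - P * Wy F + Wy F * P := by
    rw [← hP']; abel
  rw [hx]
  abel

/-- The shear endomorphism `x ↦ x + P`, `y ↦ y + P`. -/
def shear (P : Weyl F) (hP : (Wx F - Wy F) * P = P * (Wx F - Wy F)) : Weyl F →ₐ[F] Weyl F :=
  weylEnd F (Wx F + P) (Wy F + P) (shear_rel F P hP)

lemma shear_x (P hP) : shear F P hP (Wx F) = Wx F + P := weylEnd_x F _ _ _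
lemma shear_y (P hP) : shear F P hP (Wy F) = Wy F + P := weylEnd_y F _ _ _

lemma lin_rel (p q : F) (h : p * p - q * q = 1) :
    (q • Wx F + p • Wy F) * (p • Wx F + q • Wy F)
      = (p • Wx F + q • Wy F) * (q • Wx F + p • Wy F) + 1 := by
  simp only [add_mul, mul_add, smul_mul_assoc, mul_smul_comm, smul_smul, weyl_rel]
  match_scalars
  · ring
  · ring
  · linear_combination h
  · ring

def linEnd (p q : F) (h : p * p - q * q = 1) : Weyl F →ₐ[F] Weyl F :=
  weylEnd F (p • Wx F + q • Wy F) (q • Wx F + p • Wy F) (lin_rel F p q h)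

lemma linEnd_x (p q h) : linEnd F p q h (Wx F) = p • Wx F + q • Wy F := weylEnd_x F _ _ _
lemma linEnd_y (p q h) : linEnd F p q h (Wy F) = q • Wx F + p • Wy F := weylEnd_y F _ _ _

end AuxWeyl

/-- The explicit family
`f(x) = c + ((4b²+1)/4b)x + ((4b²-1)/4b)y + Σ a_(2j) S̃_(2j)` (and symmetrically for `y`)
extends to an α-endomorphism of `A₁(F)` which is an automorphism. -/
theorem explicit_family_alpha_auto (F : Type) [Field F] [CharZero F]
    (α : Weyl F →ₗ[F] Weyl F)
    (hαanti : ∀ a b : Weyl F, α (a * b) = α b * α a)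
    (hα2 : ∀ w : Weyl F, α (α w) = w)
    (hαx : α (Wx F) = Wy F) (hαy : α (Wy F) = Wx F)
    (b : F) (hb : b ≠ 0) (c : F) (J : ℕ) (a : ℕ → F) :
    ∃ f : Weyl F →ₐ[F] Weyl F,
      f (Wx F) = algebraMap F (Weyl F) c +
        ((4 * b ^ 2 + 1) / (4 * b)) • Wx F + ((4 * b ^ 2 - 1) / (4 * b)) • Wy F +
        ∑ j ∈ Finset.Icc 1 J, a (2 * j) • XmY F (2 * j) ∧
      f (Wy F) = algebraMap F (Weyl F) c +
        ((4 * b ^ 2 + 1) / (4 * b)) • Wy F + ((4 * b ^ 2 - 1) / (4 * b)) • Wx F +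
        ∑ j ∈ Finset.Icc 1 J, a (2 * j) • XmY F (2 * j) ∧
      (∀ w : Weyl F, f (α w) = α (f w)) ∧
      Function.Bijective f := by
  set p : F := (4 * b ^ 2 + 1) / (4 * b) with hp
  set q : F := (4 * b ^ 2 - 1) / (4 * b) with hq
  have hpq : p * p - q * q = 1 := by rw [hp, hq]; field_simp; ring
  have hpq' : p * p - (-q) * (-q) = 1 := by linear_combination hpq
  set S : Weyl F := ∑ j ∈ Finset.Icc 1 J, a (2 * j) • XmY F (2 * j) with hS
  have hwS : (Wx F - Wy F) * S = S * (Wx F - Wy F) := by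
    rw [hS, Finset.mul_sum, Finset.sum_mul]
    exact Finset.sum_congr rfl fun j _ => by
      rw [mul_smul_comm, smul_mul_assoc, XmY_comm]
  have hwP : (Wx F - Wy F) * ((2 * b)⁻¹ • S) = ((2 * b)⁻¹ • S) * (Wx F - Wy F) := by
    rw [mul_smul_comm, smul_mul_assoc, hwS]
  have hwnP : (Wx F - Wy F) * (-((2 * b)⁻¹ • S)) = (-((2 * b)⁻¹ • S)) * (Wx F - Wy F) := by
    rw [← neg_one_smul F ((2 * b)⁻¹ • S), mul_smul_comm, smul_mul_assoc, hwP]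
  have hwC : (Wx F - Wy F) * (algebraMap F (Weyl F) (c / (2 * b)))
      = (algebraMap F (Weyl F) (c / (2 * b))) * (Wx F - Wy F) := (Algebra.commutes _ _).symm
  have hwnC : (Wx F - Wy F) * (-(algebraMap F (Weyl F) (c / (2 * b))))
      = (-(algebraMap F (Weyl F) (c / (2 * b)))) * (Wx F - Wy F) := by
    rw [← neg_one_smul F (algebraMap F (Weyl F) (c / (2 * b))), mul_smul_comm, smul_mul_assoc, hwC]
  set M := linEnd F p q hpq with hM
  set Mi := linEnd F p (-q) hpq' with hMi
  set σ := shear F ((2 * b)⁻¹ • S) hwP with hσ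
  set σi := shear F (-((2 * b)⁻¹ • S)) hwnP with hσi
  set τ := shear F (algebraMap F (Weyl F) (c / (2 * b))) hwC with hτ
  set τi := shear F (-(algebraMap F (Weyl F) (c / (2 * b)))) hwnC with hτi
  have hMx : M (Wx F) = p • Wx F + q • Wy F := linEnd_x F p q hpq
  have hMy : M (Wy F) = q • Wx F + p • Wy F := linEnd_y F p q hpq
  have hMix : Mi (Wx F) = p • Wx F + (-q) • Wy F := linEnd_x F p (-q) hpq'
  have hMiy : Mi (Wy F) = (-q) • Wx F + p • Wy F := linEnd_y F p (-q) hpq'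
  have hσx : σ (Wx F) = Wx F + (2 * b)⁻¹ • S := shear_x F _ hwP
  have hσy : σ (Wy F) = Wy F + (2 * b)⁻¹ • S := shear_y F _ hwP
  have hσix : σi (Wx F) = Wx F + -((2 * b)⁻¹ • S) := shear_x F _ hwnP
  have hσiy : σi (Wy F) = Wy F + -((2 * b)⁻¹ • S) := shear_y F _ hwnP
  have hτx : τ (Wx F) = Wx F + algebraMap F (Weyl F) (c / (2 * b)) := shear_x F _ hwC
  have hτy : τ (Wy F) = Wy F + algebraMap F (Weyl F) (c / (2 * b)) := shear_y F _ hwC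
  have hτix : τi (Wx F) = Wx F + -(algebraMap F (Weyl F) (c / (2 * b))) := shear_x F _ hwnC
  have hτiy : τi (Wy F) = Wy F + -(algebraMap F (Weyl F) (c / (2 * b))) := shear_y F _ hwnC
  have hfixS : ∀ (g : Weyl F →ₐ[F] Weyl F), g (Wx F) - g (Wy F) = Wx F - Wy F → g S = S := by
    intro g hg
    rw [hS, map_sum]
    exact Finset.sum_congr rfl fun j _ => by rw [map_smul, hom_fix F g hg]
  have hσS : σ S = S := hfixS σ (by rw [hσx, hσy]; abel)
  have hσiS : σi S = S := hfixS σi (by rw [hσix, hσiy]; abel)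
  have hτS : τ S = S := hfixS τ (by rw [hτx, hτy]; abel)
  set f := τ.comp (σ.comp M) with hf
  have hfx : f (Wx F) = algebraMap F (Weyl F) c + p • Wx F + q • Wy F + S := by
    have h0 : f (Wx F) = τ (σ (M (Wx F))) := rfl
    rw [h0, hMx]
    simp only [map_add, map_smul, hσx, hσy, hτx, hτy, hτS]
    simp only [Algebra.algebraMap_eq_smul_one]
    match_scalars
    all_goals try ring
    all_goals field_simp
    all_goals try ring
    all_goals (rw [hp, hq]; field_simp; ring)
  have hfy : f (Wy F) = algebraMap F (Weyl F) c + p • Wy F + q • Wx F + S := by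
    have h0 : f (Wy F) = τ (σ (M (Wy F))) := rfl
    rw [h0, hMy]
    simp only [map_add, map_smul, hσx, hσy, hτx, hτy, hτS]
    simp only [Algebra.algebraMap_eq_smul_one]
    match_scalars
    all_goals try ring
    all_goals field_simp
    all_goals try ring
    all_goals (rw [hp, hq]; field_simp; ring)
  -- two-sided inverses
  have hMMi : M.comp Mi = AlgHom.id F (Weyl F) := by
    apply weyl_hom_ext F <;>
      simp only [AlgHom.comp_apply, AlgHom.id_apply, hMx, hMy, hMix, hMiy, map_add, map_smul] <;>
      match_scalars <;> (try ring) <;> (field_simp; try ring) <;> linear_combination hpq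
  have hMiM : Mi.comp M = AlgHom.id F (Weyl F) := by
    apply weyl_hom_ext F <;>
      simp only [AlgHom.comp_apply, AlgHom.id_apply, hMx, hMy, hMix, hMiy, map_add, map_smul] <;>
      match_scalars <;> (try ring) <;> (field_simp; try ring) <;> linear_combination hpq
  have hσσi : σ.comp σi = AlgHom.id F (Weyl F) := by
    apply weyl_hom_ext F <;>
      simp only [AlgHom.comp_apply, AlgHom.id_apply, hσx, hσy, hσix, hσiy, map_add, map_neg,
        map_smul, hσS] <;>
      abel
  have hσiσ : σi.comp σ = AlgHom.id F (Weyl F) := by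
    apply weyl_hom_ext F <;>
      simp only [AlgHom.comp_apply, AlgHom.id_apply, hσx, hσy, hσix, hσiy, map_add, map_neg,
        map_smul, hσiS] <;>
      abel
  have hττi : τ.comp τi = AlgHom.id F (Weyl F) := by
    apply weyl_hom_ext F <;>
      simp only [AlgHom.comp_apply, AlgHom.id_apply, hτx, hτy, hτix, hτiy, map_add, map_neg,
        AlgHom.commutes] <;>
      abel
  have hτiτ : τi.comp τ = AlgHom.id F (Weyl F) := by
    apply weyl_hom_ext F <;>
      simp only [AlgHom.comp_apply, AlgHom.id_apply, hτx, hτy, hτix, hτiy, map_add, map_neg,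
        AlgHom.commutes] <;>
      abel
  have bij : ∀ (g gi : Weyl F →ₐ[F] Weyl F), g.comp gi = AlgHom.id F (Weyl F) →
      gi.comp g = AlgHom.id F (Weyl F) → Function.Bijective g := by
    intro g gi h1 h2
    refine Function.bijective_iff_has_inverse.mpr ⟨gi, fun z => ?_, fun z => ?_⟩
    · simpa using DFunLike.congr_fun h2 z
    · simpa using DFunLike.congr_fun h1 z
  have hfbij : Function.Bijective f := by
    rw [hf]
    simp only [AlgHom.coe_comp]
    exact (bij τ τi hττi hτiτ).comp ((bij σ σi hσσi hσiσ).comp (bij M Mi hMMi hMiM))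
  -- α facts
  have hα1 : α (1 : Weyl F) = 1 := by
    have h := hαanti (α 1) 1
    rw [mul_one, hα2] at h
    rw [mul_one] at h
    exact h.symm
  have hαalg : ∀ r : F, α (algebraMap F (Weyl F) r) = algebraMap F (Weyl F) r := by
    intro r
    rw [Algebra.algebraMap_eq_smul_one, map_smul, hα1]
  have hαw : α (Wx F - Wy F) = -(Wx F - Wy F) := by
    rw [map_sub, hαx, hαy]; abel
  have hαXmY : ∀ n : ℕ, α (XmY F n) = ((-1 : F) ^ n) • XmY F n := by
    intro n
    induction n using Nat.twoStepInduction with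
    | zero => simp [XmY_zero, hα1]
    | one =>
      rw [XmY_one, map_sub, hαx, hαy]
      match_scalars <;> ring
    | more n ih1 ih2 =>
      rw [XmY_rec, map_add, map_smul, hαanti, hαw, ih2, ih1]
      have h1 : -(Wx F - Wy F) * XmY F (n + 1) = (-1 : F) • (XmY F (n + 1) * (Wx F - Wy F)) := by
        rw [← neg_one_smul F (Wx F - Wy F), smul_mul_assoc, XmY_comm]
      rw [mul_smul_comm, h1]
      match_scalars <;> ring
  have hαS : α S = S := by
    rw [hS, map_sum]
    refine Finset.sum_congr rfl fun j _ => ?_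
    rw [map_smul, hαXmY, pow_mul, neg_one_sq, one_pow, one_smul]
  have hαfx : α (f (Wx F)) = f (Wy F) := by
    rw [hfx, hfy, map_add, map_add, map_add, map_smul, map_smul, hαx, hαy, hαS, hαalg]
  have hαfy : α (f (Wy F)) = f (Wx F) := by
    rw [hfx, hfy, map_add, map_add, map_add, map_smul, map_smul, hαx, hαy, hαS, hαalg]
  have hcomm : ∀ z : Weyl F, f (α z) = α (f z) := by
    intro z
    have hz : z ∈ Algebra.adjoin F ({Wx F, Wy F} : Set (Weyl F)) := by
      rw [adjoin_top]; exact Algebra.mem_top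
    induction hz using Algebra.adjoin_induction with
    | mem u hu =>
      simp only [Set.mem_insert_iff, Set.mem_singleton_iff] at hu
      rcases hu with rfl | rfl
      · rw [hαx]; exact hαfx.symm
      · rw [hαy]; exact hαfy.symm
    | algebraMap r => rw [hαalg, AlgHom.commutes, hαalg]
    | add u v hu hv ihu ihv => simp only [map_add, ihu, ihv]
    | mul u v hu hv ihu ihv =>
      rw [hαanti, map_mul, ihv, ihu, map_mul, hαanti]
  exact ⟨f, hfx, hfy, hcomm, hfbij⟩
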